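/- For all positive integers r and n, one has v(r·n) ≤ r · v(n). -/

import Mathlib

open MeasureTheory Filter Set Metric
open scoped ENNReal NNReal Topology

noncomputable section

/-- The Euclidean plane. -/
abbrev Pt : Type := EuclideanSpace ℝ (Fin 2)

/-- The visible perimeter of the arrangement of unit disks centered at `p 0, …, p (n-1)`,
where `p i` is stacked below `p j` whenever `i < j`: the sum over `i` of the
1-dimensional Hausdorff measure of the part of the boundary circle of the disk at `p i`
not covered by the (open) disks stacked below it. -/
def vis {n : ℕ} (p : Fin n → Pt) : ℝ≥0∞ :=
  ∑ i : Fin n, μH[1] {x : Pt | dist x (p i) = 1 ∧ ∀ j : Fin n, j < i → 1 ≤ dist x (p j)}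

/- The external angles associated to the sequence of points `p 0, …, p (n-1)`:
`τ_1 = 2π`; for `i > 1`, `τ_i = 0` if `p i` lies in the convex hull of the previous
points, and otherwise `τ_i` is the arc-length measure of the set of unit vectors `u`
with `⟨u, p i⟩ > ⟨u, p j⟩` for all `j < i`. -/
open Classical in
def extAngle {n : ℕ} (p : Fin n → Pt) (i : Fin n) : ℝ≥0∞ :=
  if (i : ℕ) = 0 then ENNReal.ofReal (2 * Real.pi)
  else if p i ∈ convexHull ℝ (p '' {j : Fin n | j < i}) then 0
  else μH[1] {u : Pt | ‖u‖ = 1 ∧ ∀ j : Fin n, j < i →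
    (inner ℝ u (p j) : ℝ) < (inner ℝ u (p i) : ℝ)}

/-- `vinf n` is `v(n)`: the infimum over all sets of `n` distinct points (encoded as
injective functions `Fin n → Pt`) of the maximum visible perimeter over all
stacking orders (enumerations). -/
def vinf (n : ℕ) : ℝ≥0∞ :=
  ⨅ (p : Fin n → Pt) (_ : Function.Injective p),
    ⨆ σ : Equiv.Perm (Fin n), vis (p ∘ σ)

/-- A set of `n` points is `C`-dense if its maximum pairwise distance is at most
`C · n^{1/2}` times its minimum (nonzero) pairwise distance. -/
def CDense {n : ℕ} (C : ℝ) (p : Fin n → Pt) : Prop :=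
  ∀ i j k l : Fin n, k ≠ l →
    dist (p i) (p j) ≤ C * Real.sqrt n * dist (p k) (p l)

/- The perimeter of the convex hull of `Q`: the 1-dimensional Hausdorff measure of its
boundary if the hull has nonempty interior, and otherwise (hull is a point or a segment)
twice its diameter (= twice its length; `0` for a point or the empty set). -/
open Classical in
def per (Q : Set Pt) : ℝ≥0∞ :=
  if (interior (convexHull ℝ Q)).Nonempty then μH[1] (frontier (convexHull ℝ Q))
  else 2 * EMetric.diam (convexHull ℝ Q)

/-- The `k × k` integer grid `{1, …, k} × {1, …, k}` in the plane. -/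
def grid (k : ℕ) : Set Pt :=
  {x | ∃ a b : ℕ, 1 ≤ a ∧ a ≤ k ∧ 1 ≤ b ∧ b ≤ k ∧ x 0 = (a : ℝ) ∧ x 1 = (b : ℝ)}

/-!
Take any `n` distinct points `p` and lay out `r` translated copies of them, the translation
vectors farther apart than the diameter of `p` so that all `r·n` points are distinct. In any
stacking order, a boundary point that is visible in the whole stack is also visible in the
substack formed by its own copy, and that substack is a translate of `p` in some order. Hence
every stacking has visible perimeter at most `r` times the maximum over stackings of `p`.
-/

section Visibility

variable {n : ℕ}

def visibleArc (p : Fin n → Pt) (i : Fin n) : Set Pt :=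
  {x | dist x (p i) = 1 ∧ ∀ j, j < i → 1 ≤ dist x (p j)}

lemma vis_eq_sum_visibleArc (p : Fin n → Pt) : vis p = ∑ i, μH[1] (visibleArc p i) := rfl

def maxVis (p : Fin n → Pt) : ℝ≥0∞ := ⨆ σ : Equiv.Perm (Fin n), vis (p ∘ σ)

lemma vinf_eq_iInf_maxVis : vinf n = ⨅ (p : Fin n → Pt) (_ : Function.Injective p), maxVis p :=
  rfl

lemma visibleArc_isometryEquiv_comp (e : Pt ≃ᵢ Pt) (p : Fin n → Pt) (i : Fin n) :
    visibleArc (e ∘ p) i = e.symm ⁻¹' visibleArc p i := by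
  ext x
  have hdist : ∀ y, dist x (e y) = dist (e.symm x) y := fun y => by
    rw [← e.symm.dist_eq, e.symm_apply_apply]
  simp only [visibleArc, mem_preimage, Set.mem_ofPred_eq, Function.comp_apply, hdist]

lemma vis_isometryEquiv_comp (e : Pt ≃ᵢ Pt) (p : Fin n → Pt) : vis (e ∘ p) = vis p := by
  simp only [vis_eq_sum_visibleArc, visibleArc_isometryEquiv_comp,
    IsometryEquiv.hausdorffMeasure_preimage]

lemma visibleArc_subset_comp {k : ℕ} (p : Fin n → Pt) {ι : Fin k → Fin n} (hι : StrictMono ι)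
    (i : Fin k) : visibleArc p (ι i) ⊆ visibleArc (p ∘ ι) i :=
  fun _ ⟨hx, hbelow⟩ => ⟨hx, fun j hj => hbelow (ι j) (hι hj)⟩

lemma vis_comp_equiv_le_maxVis {k : ℕ} (p : Fin n → Pt) (g : Fin k ≃ Fin n) :
    vis (p ∘ g) ≤ maxVis p := by
  obtain rfl : k = n := Fin.equiv_iff_eq.mp ⟨g⟩
  exact le_iSup (fun σ : Equiv.Perm (Fin k) => vis (p ∘ σ)) g

end Visibility

section Copies

variable {n : ℕ}

lemma vis_le_sum_vis_fiber {α : Type*} [Fintype α] [DecidableEq α] (p : Fin n → Pt)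
    (c : Fin n → α) :
    vis p ≤ ∑ a, vis (p ∘ (Finset.univ.filter (c · = a)).orderEmbOfFin rfl) := by
  rw [vis_eq_sum_visibleArc, ← Finset.sum_fiberwise Finset.univ c]
  gcongr with a
  set s := Finset.univ.filter (c · = a)
  calc ∑ k ∈ s, μH[1] (visibleArc p k)
      = ∑ i, μH[1] (visibleArc p (s.orderEmbOfFin rfl i)) := by
        conv_lhs => rw [← s.map_orderEmbOfFin_univ rfl, Finset.sum_map]
        rfl
    _ ≤ vis (p ∘ s.orderEmbOfFin rfl) :=
        Finset.sum_le_sum fun i _ =>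
          measure_mono (visibleArc_subset_comp p (s.orderEmbOfFin rfl).strictMono i)

variable {α γ : Type*} [DecidableEq α]

lemma fst_orderEmbOfFin_fiber (E : Fin n ≃ α × γ) (a : α) (i) :
    (E ((Finset.univ.filter fun k => (E k).1 = a).orderEmbOfFin rfl i)).1 = a :=
  (Finset.mem_filter.mp (Finset.orderEmbOfFin_mem _ rfl i)).2

lemma bijective_snd_orderEmbOfFin_fiber (E : Fin n ≃ α × γ) (a : α) :
    Function.Bijective fun i =>
      (E ((Finset.univ.filter fun k => (E k).1 = a).orderEmbOfFin rfl i)).2 := by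
  set s := Finset.univ.filter fun k => (E k).1 = a
  refine ⟨fun i j hij => ?_, fun y => ?_⟩
  · refine (s.orderEmbOfFin rfl).injective (E.injective (Prod.ext ?_ hij))
    rw [fst_orderEmbOfFin_fiber, fst_orderEmbOfFin_fiber]
  · have hmem : E.symm (a, y) ∈ Set.range (s.orderEmbOfFin rfl) := by
      rw [s.range_orderEmbOfFin]
      simp [s]
    obtain ⟨i, hi⟩ := hmem
    exact ⟨i, by simp [hi]⟩

lemma vis_le_card_mul_maxVis {N : ℕ} [Fintype α] (p : Fin n → Pt) (b : α → Pt)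
    (E : Fin N ≃ α × Fin n) :
    vis (fun k => p (E k).2 + b (E k).1) ≤ Fintype.card α * maxVis p := by
  set q : Fin N → Pt := fun k => p (E k).2 + b (E k).1
  calc vis q
      ≤ ∑ a, vis (q ∘ (Finset.univ.filter fun k => (E k).1 = a).orderEmbOfFin rfl) :=
        vis_le_sum_vis_fiber q fun k => (E k).1
    _ ≤ ∑ _a : α, maxVis p := by
        gcongr with a
        set g := Equiv.ofBijective _ (bijective_snd_orderEmbOfFin_fiber E a)
        have hcopy : q ∘ (Finset.univ.filter fun k => (E k).1 = a).orderEmbOfFin rfl =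
            IsometryEquiv.addRight (b a) ∘ (p ∘ g) := by
          funext i
          simp only [q, g, Function.comp_apply, IsometryEquiv.addRight_apply,
            Equiv.ofBijective_apply, fst_orderEmbOfFin_fiber]
        rw [hcopy, vis_isometryEquiv_comp]
        exact vis_comp_equiv_le_maxVis p g
    _ = Fintype.card α * maxVis p := by simp

end Copies

lemma exists_nat_separated (E : Type*) [NormedAddCommGroup E] [NormedSpace ℝ E] [Nontrivial E]
    {D : ℝ} (hD : 0 ≤ D) : ∃ b : ℕ → E, Pairwise fun m m' => D ≤ dist (b m) (b m') := by
  obtain ⟨u, hu⟩ := exists_norm_eq E zero_le_one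
  refine ⟨fun m => ((m : ℝ) * D) • u, fun m m' hmm' => ?_⟩
  have hgap : (1 : ℝ) ≤ |(m : ℝ) - m'| := by
    exact_mod_cast Int.one_le_abs (sub_ne_zero.mpr (Int.ofNat_inj.not.mpr hmm'))
  calc D ≤ |(m : ℝ) - m'| * D := le_mul_of_one_le_left hD hgap
    _ = dist (((m : ℝ) * D) • u) (((m' : ℝ) * D) • u) := by
        rw [dist_eq_norm, ← sub_smul, norm_smul, hu, ← sub_mul, Real.norm_eq_abs, abs_mul,
          abs_of_nonneg hD, mul_one]

lemma injective_add_of_separated {E ι κ : Type*} [NormedAddCommGroup E] {p : ι → E}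
    (hp : Function.Injective p) {b : κ → E} {D : ℝ} (hpD : ∀ i j, dist (p i) (p j) < D)
    (hbD : Pairwise fun m m' => D ≤ dist (b m) (b m')) :
    Function.Injective fun x : κ × ι => p x.2 + b x.1 := by
  rintro ⟨m, i⟩ ⟨m', j⟩ h
  have hm : m = m' := by
    by_contra hne
    have hdiff : b m - b m' = p j - p i :=
      sub_eq_sub_iff_add_eq_add.mpr (by rw [add_comm]; exact h)
    have hsep : D ≤ dist (b m) (b m') := hbD hne
    rw [dist_eq_norm, hdiff, ← dist_eq_norm] at hsep
    exact (hpD j i).not_ge hsep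
  subst hm
  simp only [add_left_inj] at h
  rw [hp h]

lemma vinf_mul_le_mul_maxVis {n : ℕ} (r : ℕ) {p : Fin n → Pt} (hp : Function.Injective p) :
    vinf (r * n) ≤ r * maxVis p := by
  obtain ⟨b, hb⟩ := exists_nat_separated Pt (D := diam (range p) + 1) (by positivity)
  have hpD : ∀ i j, dist (p i) (p j) < diam (range p) + 1 := fun i j =>
    (dist_le_diam_of_mem (finite_range p).isBounded (mem_range_self i) (mem_range_self j)).trans_lt
      (lt_add_one _)
  set E : Fin (r * n) ≃ Fin r × Fin n := finProdFinEquiv.symm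
  set P : Fin (r * n) → Pt := fun k => p (E k).2 + b (E k).1
  have hP : Function.Injective P :=
    (injective_add_of_separated hp hpD fun m m' h => hb (Fin.val_injective.ne h)).comp
      E.injective
  calc vinf (r * n) ≤ maxVis P := iInf₂_le P hP
    _ ≤ r * maxVis p := iSup_le fun σ => by
        have hcopies := vis_le_card_mul_maxVis p (b ∘ Fin.val) (σ.trans E)
        rw [Fintype.card_fin] at hcopies
        exact hcopies

theorem vinf_mul_le_general (r n : ℕ) (hr : 0 < r) :
    vinf (r * n) ≤ (r : ℝ≥0∞) * vinf n := by
  have hr0 : (r : ℝ≥0∞) ≠ 0 := Nat.cast_ne_zero.mpr hr.ne'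
  simp_rw [vinf_eq_iInf_maxVis, ENNReal.mul_iInf_of_ne hr0 (ENNReal.natCast_ne_top r)]
  exact le_iInf₂ fun p hp => vinf_mul_le_mul_maxVis r hp

/-- `v(r·n) ≤ r · v(n)`. -/
theorem vinf_mul_le (r n : ℕ) (hr : 0 < r) (hn : 0 < n) :
    vinf (r * n) ≤ (r : ℝ≥0∞) * vinf n :=
  vinf_mul_le_general r n hr
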